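/- Let H be a Hilbert space (or more generally a Banach space), and let S be an invertible bounded operator on H with inverse S⁻¹. For a closed subspace M of B(H), define d(M, SMS⁻¹) as the Hausdorff distance between the closed unit balls of M and SMS⁻¹ := {S x S⁻¹ : x ∈ M}. Then d(M, S M S⁻¹) ≤ 2(1 + ‖S‖·‖S⁻¹‖)·‖S − I‖. -/
import Mathlib

open ContinuousLinearMap

/-- Clamping a point into the unit ball at most doubles the distance to a
point of the unit ball. -/
lemma clamp_aux {E : Type*} [NormedAddCommGroup E] [NormedSpace ℝ E]
    (z w : E) (hw : ‖w‖ ≤ 1) :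
    ‖w - (max 1 ‖z‖)⁻¹ • z‖ ≤ 2 * ‖w - z‖ := by
  set t : ℝ := max 1 ‖z‖ with ht
  have ht1 : 1 ≤ t := le_max_left _ _
  have ht0 : 0 < t := lt_of_lt_of_le one_pos ht1
  have hz : ‖z‖ ≤ t := le_max_right _ _
  have h1 : ‖z - t⁻¹ • z‖ = (1 - t⁻¹) * ‖z‖ := by
    have e : z - t⁻¹ • z = (1 - t⁻¹) • z := by rw [sub_smul, one_smul]
    rw [e, norm_smul, Real.norm_eq_abs, abs_of_nonneg]
    have : t⁻¹ ≤ 1 := inv_le_one_of_one_le₀ ht1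
    linarith
  have h2 : (1 - t⁻¹) * ‖z‖ ≤ ‖w - z‖ := by
    rcases le_or_gt ‖z‖ 1 with h | h
    · have e : t = 1 := max_eq_left h
      rw [e]; simp
    · have e : t = ‖z‖ := max_eq_right h.le
      rw [e]
      have hzpos : (0:ℝ) < ‖z‖ := lt_trans one_pos h
      have e2 : (1 - ‖z‖⁻¹) * ‖z‖ = ‖z‖ - 1 := by field_simp
      rw [e2]
      have h3 : ‖z‖ - ‖w‖ ≤ ‖w - z‖ := by
        rw [norm_sub_rev]; exact norm_sub_norm_le _ _
      linarith
  calc ‖w - t⁻¹ • z‖ ≤ ‖w - z‖ + ‖z - t⁻¹ • z‖ :=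
        norm_sub_le_norm_sub_add_norm_sub w z (t⁻¹ • z)
    _ ≤ ‖w - z‖ + ‖w - z‖ := by rw [h1]; linarith
    _ = 2 * ‖w - z‖ := by ring

/-- For an invertible operator `S` on a Hilbert space `H` (with inverse
`S'`) and a closed subspace `M` of `B(H)`, the Hausdorff distance between the unit
ball of `M` and the unit ball of `S M S⁻¹` is at most `2(1 + ‖S‖‖S⁻¹‖)‖S - I‖`. -/
theorem stmt6 {H : Type*} [NormedAddCommGroup H] [InnerProductSpace ℂ H]
    [CompleteSpace H]
    (S S' : H →L[ℂ] H) (hSS' : S ∘L S' = 1) (hS'S : S' ∘L S = 1)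
    (M : Submodule ℂ (H →L[ℂ] H)) (hM : IsClosed (M : Set (H →L[ℂ] H))) :
    Metric.hausdorffDist
      {x : H →L[ℂ] H | x ∈ M ∧ ‖x‖ ≤ 1}
      {y : H →L[ℂ] H | (∃ x ∈ M, y = S ∘L x ∘L S') ∧ ‖y‖ ≤ 1}
      ≤ 2 * (1 + ‖S‖ * ‖S'‖) * ‖S - 1‖ := by
  have hm : ∀ f g : H →L[ℂ] H, f ∘L g = f * g := fun _ _ => rfl
  have hmul1 : S * S' = 1 := hSS'
  have hmul2 : S' * S = 1 := hS'S
  have hS'1 : ‖S' - 1‖ ≤ ‖S'‖ * ‖S - 1‖ := by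
    have e : S' - 1 = S' * (1 - S) := by rw [mul_sub, mul_one, hmul2]
    calc ‖S' - 1‖ = ‖S' * (1 - S)‖ := by rw [e]
      _ ≤ ‖S'‖ * ‖1 - S‖ := norm_mul_le _ _
      _ = ‖S'‖ * ‖S - 1‖ := by rw [norm_sub_rev]
  set c : ℝ := (1 + ‖S‖ * ‖S'‖) * ‖S - 1‖ with hc
  have fwd : ∀ x : H →L[ℂ] H, ‖x‖ ≤ 1 → ‖x - S * (x * S')‖ ≤ c := by
    intro x hx
    have e : x - S * (x * S') = -((S * x) * (S' - 1) + (S - 1) * x) := by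
      noncomm_ring
    rw [e, norm_neg]
    have h1 : ‖(S * x) * (S' - 1)‖ ≤ ‖S‖ * ‖S'‖ * ‖S - 1‖ := by
      calc ‖(S * x) * (S' - 1)‖ ≤ ‖S * x‖ * ‖S' - 1‖ := norm_mul_le _ _
        _ ≤ (‖S‖ * ‖x‖) * (‖S'‖ * ‖S - 1‖) :=
            mul_le_mul (norm_mul_le _ _) hS'1 (norm_nonneg _) (by positivity)
        _ ≤ (‖S‖ * 1) * (‖S'‖ * ‖S - 1‖) := by gcongr
        _ = ‖S‖ * ‖S'‖ * ‖S - 1‖ := by ring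
    have h2 : ‖(S - 1) * x‖ ≤ ‖S - 1‖ := by
      calc ‖(S - 1) * x‖ ≤ ‖S - 1‖ * ‖x‖ := norm_mul_le _ _
        _ ≤ ‖S - 1‖ * 1 := by gcongr
        _ = ‖S - 1‖ := mul_one _
    calc ‖(S * x) * (S' - 1) + (S - 1) * x‖
        ≤ ‖(S * x) * (S' - 1)‖ + ‖(S - 1) * x‖ := norm_add_le _ _
      _ ≤ ‖S‖ * ‖S'‖ * ‖S - 1‖ + ‖S - 1‖ := add_le_add h1 h2
      _ = c := by rw [hc]; ring
  have bwd : ∀ y : H →L[ℂ] H, ‖y‖ ≤ 1 → ‖y - S' * (y * S)‖ ≤ c := by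
    intro y hy
    have e : y - S' * (y * S) = -((S' - 1) * (y * S) + y * (S - 1)) := by
      noncomm_ring
    rw [e, norm_neg]
    have h1 : ‖(S' - 1) * (y * S)‖ ≤ ‖S'‖ * ‖S - 1‖ * ‖S‖ := by
      calc ‖(S' - 1) * (y * S)‖ ≤ ‖S' - 1‖ * ‖y * S‖ := norm_mul_le _ _
        _ ≤ (‖S'‖ * ‖S - 1‖) * (‖y‖ * ‖S‖) :=
            mul_le_mul hS'1 (norm_mul_le _ _) (norm_nonneg _) (by positivity)
        _ ≤ (‖S'‖ * ‖S - 1‖) * (1 * ‖S‖) := by gcongr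
        _ = ‖S'‖ * ‖S - 1‖ * ‖S‖ := by ring
    have h2 : ‖y * (S - 1)‖ ≤ ‖S - 1‖ := by
      calc ‖y * (S - 1)‖ ≤ ‖y‖ * ‖S - 1‖ := norm_mul_le _ _
        _ ≤ 1 * ‖S - 1‖ := by gcongr
        _ = ‖S - 1‖ := one_mul _
    calc ‖(S' - 1) * (y * S) + y * (S - 1)‖
        ≤ ‖(S' - 1) * (y * S)‖ + ‖y * (S - 1)‖ := norm_add_le _ _
      _ ≤ ‖S'‖ * ‖S - 1‖ * ‖S‖ + ‖S - 1‖ := add_le_add h1 h2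
      _ = c := by rw [hc]; ring
  have hc0 : 0 ≤ c := by rw [hc]; positivity
  rw [show (2 : ℝ) * (1 + ‖S‖ * ‖S'‖) * ‖S - 1‖ = 2 * c by rw [hc]; ring]
  apply Metric.hausdorffDist_le_of_mem_dist (by positivity)
  · rintro x ⟨hxM, hx1⟩
    set z : H →L[ℂ] H := S * (x * S') with hz
    set t : ℝ := max 1 ‖z‖ with ht
    have ht0 : 0 < t := lt_of_lt_of_le one_pos (le_max_left _ _)
    have hzt : ‖z‖ ≤ t := le_max_right _ _
    refine ⟨t⁻¹ • z, ⟨⟨t⁻¹ • x, M.smul_of_tower_mem _ hxM, ?_⟩, ?_⟩, ?_⟩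
    · show t⁻¹ • z = S * ((t⁻¹ • x) * S')
      rw [smul_mul_assoc, mul_smul_comm, hz]
    · rw [norm_smul, Real.norm_eq_abs, abs_of_pos (inv_pos.mpr ht0)]
      calc t⁻¹ * ‖z‖ ≤ t⁻¹ * t := by gcongr
        _ = 1 := inv_mul_cancel₀ ht0.ne'
    · rw [dist_eq_norm]
      calc ‖x - t⁻¹ • z‖ ≤ 2 * ‖x - z‖ := clamp_aux z x hx1
        _ ≤ 2 * c := by have := fwd x hx1; rw [← hz] at this; linarith
  · rintro y ⟨⟨x, hxM, hyx⟩, hy1⟩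
    set z : H →L[ℂ] H := S' * (y * S) with hz
    have hzx : z = x := by
      have hyx' : y = S * (x * S') := hyx
      rw [hz, hyx']
      calc S' * ((S * (x * S')) * S) = (S' * S) * x * (S' * S) := by noncomm_ring
        _ = x := by rw [hmul2]; simp
    set t : ℝ := max 1 ‖z‖ with ht
    have ht0 : 0 < t := lt_of_lt_of_le one_pos (le_max_left _ _)
    have hzt : ‖z‖ ≤ t := le_max_right _ _
    refine ⟨t⁻¹ • z, ⟨by rw [hzx]; exact M.smul_of_tower_mem _ hxM, ?_⟩, ?_⟩
    · rw [norm_smul, Real.norm_eq_abs, abs_of_pos (inv_pos.mpr ht0)]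
      calc t⁻¹ * ‖z‖ ≤ t⁻¹ * t := by gcongr
        _ = 1 := inv_mul_cancel₀ ht0.ne'
    · rw [dist_eq_norm]
      calc ‖y - t⁻¹ • z‖ ≤ 2 * ‖y - z‖ := clamp_aux z y hy1
        _ ≤ 2 * c := by have := bwd y hy1; rw [← hz] at this; linarith
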